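/- Let \lambda > 0, m > 0, \lambda^2 \neq m, and let B(t) be a process such that |B(t)| has density (1/\sqrt{\pi t})e^{-z^2/(4t)} on z > 0 for each t > 0. Let g(t) = e^{-\lambda t}[\cosh(t\sqrt{\lambda^2-m}) + (\lambda/\sqrt{\lambda^2-m})\sinh(t\sqrt{\lambda^2-m})]. Then for every t > 0, E[g(|B(t)|)] = (1/2)[(1 + \lambda/\sqrt{\lambda^2-m}) E_{1/2,1}(r_1\sqrt{t}) + (1 - \lambda/\sqrt{\lambda^2-m}) E_{1/2,1}(r_2\sqrt{t})], where r_{1,2} = -\lambda \pm \sqrt{\lambda^2 - m} and E_{1/2,1} is the Mittag-Leffler function of order 1/2. -/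

import Mathlib

open Real MeasureTheory

open Set

/-- The Mittag-Leffler function `E_{1/2,1}` of a complex argument. -/
noncomputable def mlHalfC (x : ℂ) : ℂ := ∑' k : ℕ, x ^ k / Complex.Gamma (((k : ℝ) / 2 + 1 : ℝ))

/-- The telegraph ODE solution `g`. -/
noncomputable def telegraphSol (lam m : ℝ) (t : ℝ) : ℂ :=
  Complex.exp (-(lam : ℂ) * t) *
    (Complex.cosh (t * ((lam ^ 2 - m : ℝ) : ℂ) ^ (1/2 : ℂ)) +
      ((lam : ℂ) / ((lam ^ 2 - m : ℝ) : ℂ) ^ (1/2 : ℂ)) *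
        Complex.sinh (t * ((lam ^ 2 - m : ℝ) : ℂ) ^ (1/2 : ℂ)))

lemma gamma_half_lower (j : ℕ) : (1/2 : ℝ) * j.factorial ≤ Real.Gamma ((j:ℝ) + 3/2) := by
  induction j with
  | zero =>
      rw [show ((0:ℕ):ℝ) + 3/2 = 1/2 + 1 by norm_num, Real.Gamma_add_one (by norm_num),
        Real.Gamma_one_half_eq]
      have h1 : (1:ℝ) ≤ Real.sqrt π := by
        rw [show (1:ℝ) = Real.sqrt 1 by simp]
        exact Real.sqrt_le_sqrt (by linarith [Real.pi_gt_three])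
      simp only [Nat.factorial_zero, Nat.cast_one, mul_one]
      nlinarith
  | succ j ih =>
      have h : ((j+1:ℕ):ℝ) + 3/2 = ((j:ℝ) + 3/2) + 1 := by push_cast; ring
      rw [h, Real.Gamma_add_one (by positivity)]
      have h2 : ((j+1:ℕ).factorial : ℝ) = ((j:ℝ)+1) * j.factorial := by
        rw [Nat.factorial_succ]; push_cast; ring
      rw [h2]
      have hfac : (0:ℝ) ≤ j.factorial := by positivity
      nlinarith

lemma summable_ml (x : ℝ) (hx : 0 ≤ x) :
    Summable (fun k : ℕ => x ^ k / Real.Gamma ((k:ℝ)/2 + 1)) := by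
  apply Summable.even_add_odd
  · have he : ∀ j : ℕ, x ^ (2*j) / Real.Gamma (((2*j:ℕ):ℝ)/2 + 1) = (x^2)^j / j.factorial := by
      intro j
      rw [show (((2*j:ℕ):ℝ))/2 + 1 = (j:ℝ) + 1 by push_cast; ring,
        Real.Gamma_nat_eq_factorial, pow_mul]
    simpa only [he] using Real.summable_pow_div_factorial (x^2)
  · refine Summable.of_nonneg_of_le (f := fun j => (2*x) * ((x^2)^j / j.factorial))
      (fun j => div_nonneg (pow_nonneg hx _) (Real.Gamma_pos_of_pos (by positivity)).le)
      (fun j => ?_) ((Real.summable_pow_div_factorial (x^2)).mul_left _)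
    have harg : (((2*j+1:ℕ)):ℝ)/2 + 1 = (j:ℝ) + 3/2 := by push_cast; ring
    rw [harg]
    have hG := gamma_half_lower j
    have hGpos : 0 < Real.Gamma ((j:ℝ) + 3/2) := Real.Gamma_pos_of_pos (by positivity)
    have hxp : x ^ (2*j+1) = x * (x^2)^j := by rw [pow_succ, pow_mul]; ring
    rw [hxp, div_le_iff₀ hGpos]
    have hfac : (0:ℝ) < j.factorial := by positivity
    have hpow : (0:ℝ) ≤ (x^2)^j := by positivity
    calc x * (x^2)^j = (2*x) * ((x^2)^j / j.factorial) * ((1/2) * j.factorial) := by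
          field_simp
      _ ≤ (2*x) * ((x^2)^j / j.factorial) * Real.Gamma ((j:ℝ) + 3/2) := by
          apply mul_le_mul_of_nonneg_left hG; positivity

lemma moment_nat (k : ℕ) {t : ℝ} (ht : 0 < t) :
    ∫ z in Ioi (0:ℝ), Real.exp (-z^2/(4*t)) * z ^ k
      = (2 * Real.sqrt t) ^ (k+1) * Real.Gamma (((k:ℝ)+1)/2) / 2 := by
  have hb : (0:ℝ) < 1/(4*t) := by positivity
  have hs : (0:ℝ) < ((k:ℝ)+1)/2 := by positivity
  set s : ℝ := ((k:ℝ)+1)/2 with hsdef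
  have key := integral_comp_rpow_Ioi_of_pos
    (g := fun y : ℝ => y ^ (s - 1) * Real.exp (-((1/(4*t)) * y))) (p := 2) zero_lt_two
  rw [integral_rpow_mul_exp_neg_mul_Ioi hs hb] at key
  simp only [smul_eq_mul] at key
  have congr1 : ∀ x ∈ Ioi (0:ℝ),
      (2 * x ^ ((2:ℝ) - 1)) * ((x ^ (2:ℝ)) ^ (s - 1) * Real.exp (-((1/(4*t)) * x ^ (2:ℝ))))
        = 2 * (Real.exp (-x^2/(4*t)) * x ^ k) := by
    intro x hx
    have hx0 : (0:ℝ) < x := hx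
    have e1 : x ^ (2:ℝ) = x ^ (2:ℕ) := by
      rw [← Real.rpow_natCast x 2]; norm_num
    have e2 : (x ^ (2:ℝ)) ^ (s - 1) = x ^ (2*(s-1)) := (Real.rpow_mul hx0.le 2 (s-1)).symm
    rw [e2]
    have e3 : x ^ ((2:ℝ)-1) * x ^ (2*(s-1)) = x ^ (k:ℝ) := by
      rw [← Real.rpow_add hx0]; congr 1; rw [hsdef]; ring
    have e4 : -((1/(4*t)) * x ^ (2:ℝ)) = -x^2/(4*t) := by rw [e1]; push_cast; field_simp
    rw [e4]
    calc 2 * x ^ ((2:ℝ)-1) * (x ^ (2*(s-1)) * Real.exp (-x^2/(4*t)))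
        = 2 * ((x ^ ((2:ℝ)-1) * x ^ (2*(s-1))) * Real.exp (-x^2/(4*t))) := by ring
      _ = 2 * (Real.exp (-x^2/(4*t)) * x ^ k) := by
          rw [e3, Real.rpow_natCast]; ring
  rw [setIntegral_congr_fun measurableSet_Ioi congr1, integral_const_mul] at key
  have h4t : (1/(1/(4*t)) : ℝ) ^ s = (2 * Real.sqrt t) ^ (k+1) := by
    have h44 : (1/(1/(4*t)) : ℝ) = (2 * Real.sqrt t)^(2:ℕ) := by
      rw [one_div_one_div, mul_pow, Real.sq_sqrt ht.le]; ring
    rw [h44, ← Real.rpow_natCast (2 * Real.sqrt t) 2, ← Real.rpow_mul (by positivity),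
      ← Real.rpow_natCast (2 * Real.sqrt t) (k+1)]
    congr 1
    rw [hsdef]; push_cast; ring
  rw [h4t] at key
  linarith [key]

lemma const_id (k : ℕ) {t : ℝ} (ht : 0 < t) :
    (2 * Real.sqrt t) ^ (k+1) * Real.Gamma (((k:ℝ)+1)/2) / 2 / k.factorial
      = Real.sqrt (π * t) * ((Real.sqrt t) ^ k / Real.Gamma ((k:ℝ)/2 + 1)) := by
  have hdup := Real.Gamma_mul_Gamma_add_half (((k:ℝ)+1)/2)
  rw [show ((k:ℝ)+1)/2 + 1/2 = (k:ℝ)/2 + 1 by ring,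
    show 2 * (((k:ℝ)+1)/2) = (k:ℝ) + 1 by ring,
    Real.Gamma_nat_eq_factorial,
    show (1 : ℝ) - ((k:ℝ)+1) = -(k:ℝ) by ring,
    Real.rpow_neg (by norm_num : (0:ℝ) ≤ 2), Real.rpow_natCast] at hdup
  have hG2 : 0 < Real.Gamma ((k:ℝ)/2 + 1) := Real.Gamma_pos_of_pos (by positivity)
  have hG1 : Real.Gamma (((k:ℝ)+1)/2)
      = (k.factorial : ℝ) * ((2:ℝ)^k)⁻¹ * Real.sqrt π / Real.Gamma ((k:ℝ)/2+1) := by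
    rw [eq_div_iff hG2.ne']; exact hdup
  have hfac : (0:ℝ) < k.factorial := by positivity
  have h2k : (0:ℝ) < 2^k := by positivity
  rw [hG1, Real.sqrt_mul Real.pi_pos.le t, mul_pow]
  field_simp
  ring

lemma moment_int (k : ℕ) {t : ℝ} (ht : 0 < t) :
    IntegrableOn (fun z : ℝ => Real.exp (-z^2/(4*t)) * z ^ k) (Ioi 0) := by
  have hb : (0:ℝ) < 1/(4*t) := by positivity
  have h := integrableOn_rpow_mul_exp_neg_mul_sq hb
    (s := (k:ℝ)) (lt_of_lt_of_le (by norm_num) (Nat.cast_nonneg k))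
  refine h.congr_fun (fun x hx => ?_) measurableSet_Ioi
  have hx0 : (0:ℝ) < x := hx
  beta_reduce
  rw [Real.rpow_natCast]
  rw [mul_comm]
  congr 1
  field_simp

lemma hre (r : ℂ) (k : ℕ) (t : ℝ) (z : ℝ) :
    (Real.exp (-z^2/(4*t)) : ℂ) * ((r*z)^k / k.factorial)
      = (r^k / k.factorial) * ((Real.exp (-z^2/(4*t)) * z^k : ℝ) : ℂ) := by
  push_cast
  ring

lemma F_int (r : ℂ) (k : ℕ) {t : ℝ} (ht : 0 < t) :
    IntegrableOn (fun z : ℝ => (Real.exp (-z^2/(4*t)) : ℂ) * ((r*z)^k / k.factorial))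
      (Ioi 0) := by
  simp_rw [hre]
  exact ((moment_int k ht).ofReal.const_mul _)

lemma F_integral (r : ℂ) (k : ℕ) {t : ℝ} (ht : 0 < t) :
    ∫ z in Ioi (0:ℝ), (Real.exp (-z^2/(4*t)) : ℂ) * ((r*z)^k / k.factorial)
      = (r^k / k.factorial)
        * (((2 * Real.sqrt t) ^ (k+1) * Real.Gamma (((k:ℝ)+1)/2) / 2 : ℝ) : ℂ) := by
  simp_rw [hre]
  rw [integral_const_mul]
  congr 1
  rw [← moment_nat k ht]
  exact integral_ofReal

lemma F_norm (r : ℂ) (k : ℕ) {t : ℝ} (ht : 0 < t) :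
    ∫ z in Ioi (0:ℝ), ‖(Real.exp (-z^2/(4*t)) : ℂ) * ((r*z)^k / k.factorial)‖
      = Real.sqrt (π*t) * ((‖r‖ * Real.sqrt t)^k / Real.Gamma ((k:ℝ)/2+1)) := by
  have heq : ∀ z ∈ Ioi (0:ℝ),
      ‖(Real.exp (-z^2/(4*t)) : ℂ) * ((r*z)^k / k.factorial)‖
        = (‖r‖)^k / k.factorial * (Real.exp (-z^2/(4*t)) * z^k) := by
    intro z hz
    have hz0 : (0:ℝ) < z := hz
    simp only [norm_mul, norm_div, norm_pow, Complex.norm_real, Complex.norm_natCast,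
      Real.norm_eq_abs, map_mul]
    rw [abs_of_pos (Real.exp_pos _), abs_of_pos hz0]
    ring
  rw [setIntegral_congr_fun measurableSet_Ioi heq, MeasureTheory.integral_const_mul,
    moment_nat k ht]
  have h := const_id k ht
  calc (‖r‖)^k / k.factorial * ((2 * Real.sqrt t) ^ (k+1) * Real.Gamma (((k:ℝ)+1)/2) / 2)
      = (‖r‖)^k * ((2 * Real.sqrt t) ^ (k+1) * Real.Gamma (((k:ℝ)+1)/2) / 2 / k.factorial) := by
        ring
    _ = Real.sqrt (π*t) * ((‖r‖ * Real.sqrt t)^k / Real.Gamma ((k:ℝ)/2+1)) := by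
        rw [h, mul_pow]; ring

lemma core (r : ℂ) {t : ℝ} (ht : 0 < t) :
    ((1 / Real.sqrt (π * t) : ℝ) : ℂ) *
      ∫ z in Ioi (0:ℝ), (Real.exp (-z^2/(4*t)) : ℂ) * Complex.exp (r * z)
      = mlHalfC (r * Real.sqrt t) := by
  have hsqpt : (0:ℝ) < Real.sqrt (π * t) := Real.sqrt_pos.mpr (by positivity)
  have hsum : Summable (fun k : ℕ =>
      ∫ z in Ioi (0:ℝ), ‖(Real.exp (-z^2/(4*t)) : ℂ) * ((r*z)^k / k.factorial)‖) := by
    simp_rw [F_norm r _ ht]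
    exact (summable_ml (‖r‖ * Real.sqrt t)
      (by positivity)).mul_left _
  have hswap := MeasureTheory.integral_tsum_of_summable_integral_norm
    (F := fun (k : ℕ) (z : ℝ) => (Real.exp (-z^2/(4*t)) : ℂ) * ((r*z)^k / k.factorial))
    (fun k => F_int r k ht) hsum
  have h1 : ∫ z in Ioi (0:ℝ), (Real.exp (-z^2/(4*t)) : ℂ) * Complex.exp (r * z)
      = ∑' k : ℕ, ∫ z in Ioi (0:ℝ),
          (Real.exp (-z^2/(4*t)) : ℂ) * ((r*z)^k / k.factorial) := by
    rw [hswap]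
    refine integral_congr_ae (Filter.Eventually.of_forall fun z => ?_)
    simp only []
    rw [show Complex.exp (r * z) = ∑' k : ℕ, (r*z)^k / k.factorial by
      rw [Complex.exp_eq_exp_ℂ, NormedSpace.exp_eq_tsum_div], tsum_mul_left]
  rw [h1, ← tsum_mul_left]
  simp only [mlHalfC]
  refine tsum_congr fun k => ?_
  rw [F_integral r k ht, Complex.Gamma_ofReal]
  have h := const_id k ht
  have hterm : (1/Real.sqrt (π*t)) * ((2 * Real.sqrt t) ^ (k+1) * Real.Gamma (((k:ℝ)+1)/2) / 2
        / k.factorial) = (Real.sqrt t)^k / Real.Gamma ((k:ℝ)/2 + 1) := by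
    rw [h, ← mul_assoc, one_div, inv_mul_cancel₀ hsqpt.ne', one_mul]
  calc ((1 / Real.sqrt (π * t) : ℝ) : ℂ) * ((r^k / k.factorial)
          * (((2 * Real.sqrt t) ^ (k+1) * Real.Gamma (((k:ℝ)+1)/2) / 2 : ℝ) : ℂ))
      = r^k * (((1/Real.sqrt (π*t)) * ((2 * Real.sqrt t) ^ (k+1)
          * Real.Gamma (((k:ℝ)+1)/2) / 2 / k.factorial) : ℝ) : ℂ) := by
        push_cast; ring
    _ = r^k * (((Real.sqrt t)^k / Real.Gamma ((k:ℝ)/2 + 1) : ℝ) : ℂ) := by rw [hterm]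
    _ = (r * (Real.sqrt t : ℂ))^k / ((Real.Gamma ((k:ℝ)/2 + 1) : ℝ) : ℂ) := by
        push_cast; rw [mul_pow]; ring

lemma exp_int (r : ℂ) {t : ℝ} (ht : 0 < t) :
    IntegrableOn (fun z : ℝ => (Real.exp (-z^2/(4*t)) : ℂ) * Complex.exp (r * z)) (Ioi 0) := by
  have hb : (0:ℝ) < ((1/(4*t) : ℝ) : ℂ).re := by
    rw [Complex.ofReal_re]; positivity
  have h := integrable_cexp_quadratic hb r 0
  refine (h.integrableOn).congr_fun (fun z _ => ?_) measurableSet_Ioi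
  rw [Complex.ofReal_exp, ← Complex.exp_add]
  congr 1
  push_cast
  ring

theorem expectation_telegraphSol_abs_brownian (lam m : ℝ) (hlam : 0 < lam) (hm : 0 < m)
    (hne : lam ^ 2 ≠ m) (t : ℝ) (ht : 0 < t) :
    ((1 / Real.sqrt (π * t) : ℝ) : ℂ) *
        ∫ z in Set.Ioi (0:ℝ), (Real.exp (-z ^ 2 / (4 * t)) : ℂ) * telegraphSol lam m z =
      (1/2) * ((1 + (lam : ℂ) / ((lam ^ 2 - m : ℝ) : ℂ) ^ (1/2 : ℂ)) *
          mlHalfC ((-(lam : ℂ) + ((lam ^ 2 - m : ℝ) : ℂ) ^ (1/2 : ℂ)) * (Real.sqrt t : ℂ)) +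
        (1 - (lam : ℂ) / ((lam ^ 2 - m : ℝ) : ℂ) ^ (1/2 : ℂ)) *
          mlHalfC ((-(lam : ℂ) - ((lam ^ 2 - m : ℝ) : ℂ) ^ (1/2 : ℂ)) * (Real.sqrt t : ℂ))) := by
  set μ : ℂ := ((lam ^ 2 - m : ℝ) : ℂ) ^ (1/2 : ℂ) with hμ
  set a : ℂ := (lam : ℂ) / μ with ha
  have hdec : ∀ z : ℝ, telegraphSol lam m z
      = (1 + a)/2 * Complex.exp ((-(lam:ℂ) + μ) * z) + (1 - a)/2 * Complex.exp ((-(lam:ℂ) - μ) * z) := by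
    intro z
    rw [telegraphSol, Complex.cosh, Complex.sinh,
      show (-(lam:ℂ) + μ) * z = -(lam:ℂ) * z + z * μ by ring,
      show (-(lam:ℂ) - μ) * z = -(lam:ℂ) * z + -(z * μ) by ring,
      Complex.exp_add, Complex.exp_add]
    ring
  have hint1 := exp_int (-(lam:ℂ) + μ) ht
  have hint2 := exp_int (-(lam:ℂ) - μ) ht
  have hsplit : ∫ z in Ioi (0:ℝ), (Real.exp (-z ^ 2 / (4 * t)) : ℂ) * telegraphSol lam m z
      = (1 + a)/2 * (∫ z in Ioi (0:ℝ), (Real.exp (-z^2/(4*t)) : ℂ) * Complex.exp ((-(lam:ℂ) + μ) * z))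
        + (1 - a)/2 * (∫ z in Ioi (0:ℝ), (Real.exp (-z^2/(4*t)) : ℂ) * Complex.exp ((-(lam:ℂ) - μ) * z)) := by
    rw [← integral_const_mul, ← integral_const_mul, ← integral_add
      (hint1.const_mul _) (hint2.const_mul _)]
    refine integral_congr_ae (Filter.Eventually.of_forall fun z => ?_)
    simp only []
    rw [hdec z]
    ring
  have e1 := core (-(lam:ℂ) + μ) ht
  have e2 := core (-(lam:ℂ) - μ) ht
  calc ((1 / Real.sqrt (π * t) : ℝ) : ℂ) *
        ∫ z in Set.Ioi (0:ℝ), (Real.exp (-z ^ 2 / (4 * t)) : ℂ) * telegraphSol lam m z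
      = (1 + a)/2 * (((1 / Real.sqrt (π * t) : ℝ) : ℂ) *
          (∫ z in Ioi (0:ℝ), (Real.exp (-z^2/(4*t)) : ℂ) * Complex.exp ((-(lam:ℂ) + μ) * z)))
        + (1 - a)/2 * (((1 / Real.sqrt (π * t) : ℝ) : ℂ) *
          (∫ z in Ioi (0:ℝ), (Real.exp (-z^2/(4*t)) : ℂ) * Complex.exp ((-(lam:ℂ) - μ) * z))) := by
        rw [hsplit]; ring
    _ = (1 + a)/2 * mlHalfC ((-(lam:ℂ) + μ) * Real.sqrt t)
        + (1 - a)/2 * mlHalfC ((-(lam:ℂ) - μ) * Real.sqrt t) := by rw [e1, e2]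
    _ = (1/2) * ((1 + a) * mlHalfC ((-(lam:ℂ) + μ) * (Real.sqrt t : ℂ)) +
        (1 - a) * mlHalfC ((-(lam:ℂ) - μ) * (Real.sqrt t : ℂ))) := by ring
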